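/- Let X₁,…,Xₙ be i.i.d. real random variables with E(X) = 0, |X| ≤ a almost surely, and Var(X) < ∞. Then for any b > 0, P(|1/n · Σᵢ Xᵢ| > b) ≤ 2·exp(−n·b² / (2·Var(X) + (2/3)·a·b)). -/

import Mathlib

/-!
For `|x| ≤ m < 3` the tail of the exponential series is dominated by a geometric series,
because `(k + 2)! ≥ 2 · 3 ^ k`; this gives `exp x ≤ 1 + x + x² / (2 (1 - m / 3))`.
Integrating, a centred variable bounded by `a` with variance at most `v` has
`E[exp (t X)] ≤ exp (t² v / (2 (1 - t a / 3)))` for `0 ≤ t < 3 / a`. Independence multiplies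
these bounds, and Chernoff's bound at `t = b / (v + a b / 3)` gives the tail
`exp (-n b² / (2 v + 2 a b / 3))` of `∑ Xᵢ ≥ n b`. That choice of `t` needs `v > 0`, so the
exact variance is reached by letting `v` decrease to it. The two-sided bound is the union of
the upper tails of the `Xᵢ` and of the `-Xᵢ`.
-/

open MeasureTheory ProbabilityTheory Real Filter Topology Finset
open scoped Nat

lemma Real.exp_le_one_add_add_sq_div {x m : ℝ} (hx : |x| ≤ m) (hm : m < 3) :
    exp x ≤ 1 + x + x ^ 2 / (2 * (1 - m / 3)) := by
  have hm0 : 0 ≤ m := (abs_nonneg x).trans hx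
  have hexp : HasSum (fun k : ℕ => x ^ (k + 2) / (k + 2)!) (exp x - (1 + x)) := by
    have := (hasSum_nat_add_iff' 2).2 (exp_eq_exp_ℝ ▸ NormedSpace.expSeries_div_hasSum_exp x)
    simpa [sum_range_succ] using this
  have hgeom : HasSum (fun k : ℕ => x ^ 2 / 2 * (m / 3) ^ k) (x ^ 2 / (2 * (1 - m / 3))) := by
    rw [div_mul_eq_div_div, div_eq_mul_inv (x ^ 2 / 2)]
    exact (hasSum_geometric_of_lt_one (by positivity) (by linarith)).mul_left _
  have hterm (k : ℕ) : x ^ (k + 2) / (k + 2)! ≤ x ^ 2 / 2 * (m / 3) ^ k :=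
    calc x ^ (k + 2) / (k + 2)! ≤ x ^ 2 * m ^ k / (2 * 3 ^ k) := by
          refine div_le_div₀ (by positivity) ?_ (by positivity) ?_
          · calc x ^ (k + 2) ≤ |x| ^ (k + 2) := (le_abs_self _).trans (abs_pow x _).le
              _ = x ^ 2 * |x| ^ k := by rw [pow_add, sq_abs, mul_comm]
              _ ≤ x ^ 2 * m ^ k := by gcongr
          · exact_mod_cast (Nat.factorial_mul_pow_le_factorial (m := 2) (n := k)).trans_eq
              (by rw [add_comm])
      _ = x ^ 2 / 2 * (m / 3) ^ k := by rw [div_pow]; ring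
  linarith [hasSum_le hterm hexp hgeom]

lemma mul_le_abs_of_lt_abs_inv_mul {x b y : ℝ} (hx : 0 ≤ x) (h : b < |x⁻¹ * y|) :
    x * b ≤ |y| := by
  rcases hx.eq_or_lt with rfl | hx
  · simp
  · rw [abs_mul, abs_inv, abs_of_pos hx, inv_mul_eq_div, lt_div_iff₀ hx] at h
    linarith

section Bernstein

variable {Ω ι : Type*} {mΩ : MeasurableSpace Ω} {μ : Measure Ω} [IsProbabilityMeasure μ]
  {a b v : ℝ}

lemma integrable_exp_mul_of_abs_le {Y : Ω → ℝ} (hY : AEMeasurable Y μ)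
    (hbdd : ∀ᵐ ω ∂μ, |Y ω| ≤ a) (t : ℝ) : Integrable (fun ω => exp (t * Y ω)) μ := by
  refine .of_bound (by fun_prop) (exp (|t| * a)) ?_
  filter_upwards [hbdd] with ω hω
  rw [norm_of_nonneg (exp_pos _).le, exp_le_exp]
  calc t * Y ω ≤ |t| * |Y ω| := by rw [← abs_mul]; exact le_abs_self _
    _ ≤ |t| * a := by gcongr

lemma mgf_le_exp_of_abs_le {Y : Ω → ℝ} {t : ℝ} (hY : AEMeasurable Y μ) (hmean : μ[Y] = 0)
    (hbdd : ∀ᵐ ω ∂μ, |Y ω| ≤ a) (ht : 0 ≤ t) (hta : t * a < 3) :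
    mgf Y μ t ≤ exp (t ^ 2 * variance Y μ / (2 * (1 - t * a / 3))) := by
  set c := t ^ 2 / (2 * (1 - t * a / 3))
  have hY2 : MemLp Y 2 μ := .of_bound hY.aestronglyMeasurable a (by simpa using hbdd)
  have hpoint : ∀ᵐ ω ∂μ, exp (t * Y ω) ≤ 1 + t * Y ω + c * Y ω ^ 2 := by
    filter_upwards [hbdd] with ω hω
    have hx : |t * Y ω| ≤ t * a := by rw [abs_mul, abs_of_nonneg ht]; gcongr
    calc exp (t * Y ω) ≤ 1 + t * Y ω + (t * Y ω) ^ 2 / (2 * (1 - t * a / 3)) :=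
          exp_le_one_add_add_sq_div hx hta
      _ = 1 + t * Y ω + c * Y ω ^ 2 := by ring
  have hint1 : Integrable (fun ω => 1 + t * Y ω) μ :=
    (integrable_const 1).add ((hY2.integrable one_le_two).const_mul t)
  have hint2 : Integrable (fun ω => c * Y ω ^ 2) μ := hY2.integrable_sq.const_mul c
  calc mgf Y μ t ≤ ∫ ω, 1 + t * Y ω + c * Y ω ^ 2 ∂μ :=
        integral_mono_of_nonneg (ae_of_all _ fun _ => (exp_pos _).le) (hint1.add hint2) hpoint
    _ = 1 + c * variance Y μ := by
        rw [integral_add hint1 hint2, integral_add (integrable_const 1)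
          ((hY2.integrable one_le_two).const_mul t), integral_const_mul, integral_const_mul,
          hmean, variance_of_integral_eq_zero hY hmean]
        simp
    _ ≤ exp (c * variance Y μ) := by linarith [add_one_le_exp (c * variance Y μ)]
    _ = exp (t ^ 2 * variance Y μ / (2 * (1 - t * a / 3))) := by rw [mul_div_right_comm]

variable {X : ι → Ω → ℝ} {s : Finset ι}

lemma measureReal_sum_ge_le_of_abs_le_of_variance_le (hindep : iIndepFun X μ)
    (hmeas : ∀ i, Measurable (X i)) (hmean : ∀ i ∈ s, μ[X i] = 0)
    (hbdd : ∀ i ∈ s, ∀ᵐ ω ∂μ, |X i ω| ≤ a) (hvar : ∀ i ∈ s, variance (X i) μ ≤ v)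
    (ha : 0 ≤ a) (hv : 0 < v) (hb : 0 ≤ b) :
    μ.real {ω | #s * b ≤ ∑ i ∈ s, X i ω}
      ≤ exp (-(#s * b ^ 2) / (2 * v + 2 / 3 * a * b)) := by
  set d := v + a * b / 3 with hd_def
  have hd : 0 < d := by positivity
  set t := b / d
  have ht : 0 ≤ t := by positivity
  have htd : t * d = b := div_mul_cancel₀ b hd.ne'
  have hta : 1 - t * a / 3 = v / d := by
    rw [eq_div_iff hd.ne']
    linear_combination (-a / 3) * htd
  have hmgf : ∀ i ∈ s, mgf (X i) μ t ≤ exp (t * b / 2) := by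
    intro i hi
    refine (mgf_le_exp_of_abs_le (hmeas i).aemeasurable (hmean i hi) (hbdd i hi) ht
      (by linarith [div_pos hv hd])).trans (exp_le_exp.2 ?_)
    rw [hta]
    calc t ^ 2 * variance (X i) μ / (2 * (v / d)) ≤ t ^ 2 * v / (2 * (v / d)) := by
          gcongr; exact hvar i hi
      _ = t * b / 2 := by rw [← htd]; field_simp
  have hchernoff := measure_ge_le_exp_mul_mgf (#s * b) ht
    (hindep.integrable_exp_mul_sum hmeas fun i hi =>
      integrable_exp_mul_of_abs_le (hmeas i).aemeasurable (hbdd i hi) t)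
  simp only [Finset.sum_apply] at hchernoff
  calc μ.real {ω | #s * b ≤ ∑ i ∈ s, X i ω}
      ≤ exp (-t * (#s * b)) * ∏ i ∈ s, mgf (X i) μ t := by
        rwa [← hindep.mgf_sum hmeas]
    _ ≤ exp (-t * (#s * b)) * ∏ i ∈ s, exp (t * b / 2) := by
        gcongr with i hi
        exacts [fun i _ => mgf_nonneg, hmgf i hi]
    _ = exp (-(#s * b ^ 2) / (2 * v + 2 / 3 * a * b)) := by
        rw [prod_const, ← exp_nat_mul, ← exp_add]
        congr 1
        rw [show 2 * v + 2 / 3 * a * b = 2 * d by rw [hd_def]; ring,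
          eq_div_iff (by positivity)]
        linear_combination (-(#s : ℝ) * b) * htd

lemma measure_sum_ge_le_of_abs_le_of_variance_le (hindep : iIndepFun X μ)
    (hmeas : ∀ i, Measurable (X i)) (hmean : ∀ i ∈ s, μ[X i] = 0)
    (hbdd : ∀ i ∈ s, ∀ᵐ ω ∂μ, |X i ω| ≤ a) (hvar : ∀ i ∈ s, variance (X i) μ ≤ v)
    (ha : 0 < a) (hv : 0 ≤ v) (hb : 0 < b) :
    μ {ω | #s * b ≤ ∑ i ∈ s, X i ω}
      ≤ ENNReal.ofReal (exp (-(#s * b ^ 2) / (2 * v + 2 / 3 * a * b))) := by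
  rw [← ofReal_measureReal]
  refine ENNReal.ofReal_le_ofReal (ge_of_tendsto (x := 𝓝[>] v)
    (f := fun w => exp (-(#s * b ^ 2) / (2 * w + 2 / 3 * a * b))) ?_ ?_)
  · have : 2 * v + 2 / 3 * a * b ≠ 0 := by positivity
    exact (ContinuousAt.tendsto (by fun_prop (disch := assumption))).mono_left
      nhdsWithin_le_nhds
  · filter_upwards [self_mem_nhdsWithin] with w hw
    exact measureReal_sum_ge_le_of_abs_le_of_variance_le hindep hmeas hmean hbdd
      (fun i hi => (hvar i hi).trans hw.le) ha.le (hv.trans_lt hw) hb.le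

end Bernstein

theorem bernstein_inequality_general
    {Ω : Type*} [MeasureSpace Ω] [IsProbabilityMeasure (ℙ : Measure Ω)]
    (n : ℕ) (X : Fin n → Ω → ℝ) (X₀ : Ω → ℝ) (a : ℝ) (ha : 0 < a)
    (hmeas : ∀ i, Measurable (X i)) (hmeas₀ : Measurable X₀)
    (hindep : iIndepFun X ℙ)
    (hident : ∀ i, Measure.map (X i) ℙ = Measure.map X₀ ℙ)
    (hmean : ∫ ω, X₀ ω = 0)
    (hbdd : ∀ᵐ ω, |X₀ ω| ≤ a)
    (b : ℝ) (hb : 0 < b) :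
    ℙ {ω | b < |(n : ℝ)⁻¹ * ∑ i, X i ω|}
      ≤ ENNReal.ofReal (2 * Real.exp
          (-(n * b ^ 2) / (2 * variance X₀ ℙ + (2 / 3) * a * b))) := by
  have hid i : IdentDistrib (X i) X₀ ℙ ℙ :=
    ⟨(hmeas i).aemeasurable, hmeas₀.aemeasurable, hident i⟩
  have hmean' i : ℙ[X i] = 0 := (hid i).integral_eq.trans hmean
  have hbdd' i : ∀ᵐ ω, |X i ω| ≤ a :=
    (hid i).symm.ae_snd (p := fun x => |x| ≤ a) (measurableSet_le measurable_abs measurable_const)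
      hbdd
  have upper := measure_sum_ge_le_of_abs_le_of_variance_le (s := univ) hindep hmeas
    (fun i _ => hmean' i) (fun i _ => hbdd' i) (fun i _ => (hid i).variance_eq.le)
    ha (variance_nonneg _ _) hb
  have lower := measure_sum_ge_le_of_abs_le_of_variance_le
    (s := univ) (X := fun i ω => -X i ω)
    (hindep.comp (fun _ x => -x) fun _ => measurable_neg) (fun i => (hmeas i).neg)
    (fun i _ => by simp only [integral_neg, hmean' i, neg_zero])
    (fun i _ => by simpa only [abs_neg] using hbdd' i)
    (fun i _ => (variance_fun_neg.trans (hid i).variance_eq).le) ha (variance_nonneg _ _) hb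
  simp only [card_univ, Fintype.card_fin] at upper lower
  calc ℙ {ω | b < |(n : ℝ)⁻¹ * ∑ i, X i ω|}
      ≤ ℙ ({ω | n * b ≤ ∑ i, X i ω} ∪ {ω | n * b ≤ ∑ i, -X i ω}) := by
        refine measure_mono fun ω hω => ?_
        rw [Set.mem_union, Set.mem_ofPred_eq, Set.mem_ofPred_eq, sum_neg_distrib, ← le_abs]
        exact mul_le_abs_of_lt_abs_inv_mul n.cast_nonneg hω
    _ ≤ ℙ {ω | n * b ≤ ∑ i, X i ω} + ℙ {ω | n * b ≤ ∑ i, -X i ω} :=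
        measure_union_le _ _
    _ ≤ _ := by
        rw [two_mul, ENNReal.ofReal_add (exp_pos _).le (exp_pos _).le]
        exact add_le_add upper lower

/-- Bernstein's inequality: if `X₁,…,Xₙ` are i.i.d. copies of a centered random
variable `X₀` with `|X₀| ≤ a` a.s. and finite variance, then for every `b > 0`,
`ℙ(|n⁻¹ Σᵢ Xᵢ| > b) ≤ 2·exp(−n b² / (2·Var(X₀) + (2/3)·a·b))`. -/
theorem bernstein_inequality
    {Ω : Type*} [MeasureSpace Ω] [IsProbabilityMeasure (ℙ : Measure Ω)]
    (n : ℕ) (X : Fin n → Ω → ℝ) (X₀ : Ω → ℝ) (a : ℝ) (ha : 0 < a)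
    (hmeas : ∀ i, Measurable (X i)) (hmeas₀ : Measurable X₀)
    (hindep : iIndepFun X ℙ)
    (hident : ∀ i, Measure.map (X i) ℙ = Measure.map X₀ ℙ)
    (hmean : ∫ ω, X₀ ω = 0)
    (hbdd : ∀ᵐ ω, |X₀ ω| ≤ a)
    (hvar : MemLp X₀ 2)
    (b : ℝ) (hb : 0 < b) :
    ℙ {ω | b < |(n : ℝ)⁻¹ * ∑ i, X i ω|}
      ≤ ENNReal.ofReal (2 * Real.exp
          (-(n * b ^ 2) / (2 * variance X₀ ℙ + (2 / 3) * a * b))) :=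
  bernstein_inequality_general n X X₀ a ha hmeas hmeas₀ hindep hident hmean hbdd b hb
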